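/- Let ν > −1 and let N, n be nonnegative integers. The function T(x) = x^{N + 1/2} · (N! n! / (N + n)!) · P_n^{(N,ν)}(1 − 2x²) satisfies, for every x ∈ (0,1), the differential equation (1 − x²) T''(x) − 2(ν+1) x T'(x) + ((1/4 − N²)/x²) T(x) = −(N + 2n + 1/2)(N + 2ν + 2n + 3/2) · T(x). In other words, T is an eigenfunction of the operator L_{0,N,ν} with eigenvalue −(N + 2n + 1/2)(N + 2ν + 2n + 3/2). -/

import Mathlib

open Real MeasureTheory

/-- Pochhammer symbol `(a)_k = a (a+1) ⋯ (a+k-1)`. -/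
noncomputable def poch (a : ℝ) (k : ℕ) : ℝ := ∏ i ∈ Finset.range k, (a + i)

/-- Bessel function of the first kind of real order `μ`, via its defining series. -/
noncomputable def besselJ (μ x : ℝ) : ℝ :=
  ∑' k : ℕ, (-1) ^ k / (k.factorial * Real.Gamma (μ + k + 1)) * (x / 2) ^ (2 * (k : ℝ) + μ)

/-- Jacobi polynomial `P_n^{(α,β)}(x)` via its hypergeometric series. -/
noncomputable def jacobiP (α β : ℝ) (n : ℕ) (x : ℝ) : ℝ :=
  poch (α + 1) n / n.factorial *
    ∑ k ∈ Finset.range (n + 1),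
      poch (-(n : ℝ)) k * poch ((n : ℝ) + α + β + 1) k / (poch (α + 1) k * k.factorial) *
        ((1 - x) / 2) ^ k

/-- `T^ν_{N,n}(x) = x^{N+1/2} (N! n!/(N+n)!) P_n^{(N,ν)}(1-2x²)`. -/
noncomputable def Tfun (ν : ℝ) (N n : ℕ) (x : ℝ) : ℝ :=
  x ^ ((N : ℝ) + 1 / 2) * ((N.factorial * n.factorial : ℝ) / (N + n).factorial) *
    jacobiP N ν n (1 - 2 * x ^ 2)

/-!
For `x > 0`, `Tfun ν N n x = ∑_{k ≤ n} a_k x ^ s_k` with `s_k = N + 1/2 + 2k`. The operator sends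
`x ^ s` to `((s - 1/2)² - N²) x ^ (s - 2) - s (s + 2ν + 1) x ^ s`, so after adding `λ Tfun` the
`k`-th term is `G k - G (k + 1)` with `G k = 4k(k + N) a_k x ^ (s_k - 2)`: this is exactly the
two-term recurrence of the hypergeometric coefficients `a_k`. The sum telescopes to
`G 0 - G (n + 1) = 0`, as `a_{n+1}` contains the vanishing factor `(-n)_{n+1}`.
-/

open Filter Topology Finset

/-- The operator `L_{0,M,ν}`. -/
noncomputable def opL (ν M : ℝ) (f : ℝ → ℝ) (x : ℝ) : ℝ :=
  (1 - x ^ 2) * deriv (deriv f) x - 2 * (ν + 1) * x * deriv f x + ((1 / 4 - M ^ 2) / x ^ 2) * f x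

theorem opL_congr {ν M x : ℝ} {f g : ℝ → ℝ} (h : f =ᶠ[𝓝 x] g) : opL ν M f x = opL ν M g x := by
  simp only [opL, h.deriv.deriv_eq, h.deriv_eq, h.eq_of_nhds]

section SumRpow

variable (s : Finset ℕ) (c p : ℕ → ℝ) {x : ℝ}

theorem hasDerivAt_sum_rpow (hx : x ≠ 0) :
    HasDerivAt (fun y ↦ ∑ k ∈ s, c k * y ^ p k) (∑ k ∈ s, c k * p k * x ^ (p k - 1)) x := by
  simp only [mul_assoc]
  exact HasDerivAt.fun_sum fun k _ ↦ (Real.hasDerivAt_rpow_const (Or.inl hx)).const_mul (c k)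

theorem deriv_deriv_sum_rpow (hx : x ≠ 0) :
    deriv (deriv fun y ↦ ∑ k ∈ s, c k * y ^ p k) x
      = ∑ k ∈ s, c k * p k * (p k - 1) * x ^ (p k - 1 - 1) := by
  have h : deriv (fun y ↦ ∑ k ∈ s, c k * y ^ p k) =ᶠ[𝓝 x]
      fun y ↦ ∑ k ∈ s, (c k * p k) * y ^ (p k - 1) :=
    (eventually_ne_nhds hx).mono fun y hy ↦ (hasDerivAt_sum_rpow s c p hy).deriv
  rw [h.deriv_eq, (hasDerivAt_sum_rpow s _ _ hx).deriv]

theorem opL_sum_rpow (ν M : ℝ) (hx : x ≠ 0) :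
    opL ν M (fun y ↦ ∑ k ∈ s, c k * y ^ p k) x
      = ∑ k ∈ s, c k * (((p k - 1 / 2) ^ 2 - M ^ 2) * x ^ (p k - 2)
          - p k * (p k + 2 * ν + 1) * x ^ p k) := by
  rw [opL, deriv_deriv_sum_rpow s c p hx, (hasDerivAt_sum_rpow s c p hx).deriv, mul_sum, mul_sum,
    mul_sum, ← sum_sub_distrib, ← sum_add_distrib]
  refine sum_congr rfl fun k _ ↦ ?_
  have h1 : x ^ (p k - 1) = x ^ (p k - 2) * x := by
    rw [← Real.rpow_add_one hx]; ring_nf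
  have h0 : x ^ p k = x ^ (p k - 2) * x ^ 2 := by
    rw [sq, ← mul_assoc, ← h1, ← Real.rpow_add_one hx, sub_add_cancel]
  rw [h1, h0, show p k - 1 - 1 = p k - 2 by ring]
  field_simp
  ring

end SumRpow

theorem poch_succ (a : ℝ) (k : ℕ) : poch a (k + 1) = poch a k * (a + k) :=
  prod_range_succ _ _

theorem poch_natCast_add_one_pos (N k : ℕ) : 0 < poch ((N : ℝ) + 1) k :=
  prod_pos fun _ _ ↦ by positivity

theorem rpow_add_two_mul_natCast {x : ℝ} (hx : 0 < x) (c : ℝ) (k : ℕ) :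
    x ^ (c + 2 * (k : ℝ)) = x ^ c * (x ^ 2) ^ k := by
  rw [Real.rpow_add hx, ← pow_mul, ← Real.rpow_natCast, Nat.cast_mul, Nat.cast_ofNat]

namespace Tfun

variable (ν : ℝ) (N n : ℕ)

noncomputable def coeff (k : ℕ) : ℝ :=
  ((N.factorial * n.factorial : ℝ) / (N + n).factorial) * (poch ((N : ℝ) + 1) n / n.factorial) *
    (poch (-(n : ℝ)) k * poch ((n : ℝ) + N + ν + 1) k / (poch ((N : ℝ) + 1) k * k.factorial))

theorem coeff_succ (k : ℕ) :
    ((k : ℝ) + 1) * ((N : ℝ) + 1 + k) * coeff ν N n (k + 1)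
      = ((k : ℝ) - n) * ((n : ℝ) + N + ν + 1 + k) * coeff ν N n k := by
  have hpoch := (poch_natCast_add_one_pos N k).ne'
  simp only [coeff, poch_succ, Nat.factorial_succ, Nat.cast_mul, Nat.cast_succ]
  field_simp
  ring

theorem coeff_succ_self : coeff ν N n (n + 1) = 0 := by
  have h := coeff_succ ν N n n
  rw [sub_self, zero_mul, zero_mul] at h
  exact (mul_eq_zero.mp h).resolve_left (by positivity)

theorem eq_sum {x : ℝ} (hx : 0 < x) :
    Tfun ν N n x = ∑ k ∈ range (n + 1), coeff ν N n k * x ^ ((N : ℝ) + 1 / 2 + 2 * (k : ℝ)) := by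
  simp only [Tfun, jacobiP, coeff, mul_sum, rpow_add_two_mul_natCast hx,
    show (1 - (1 - 2 * x ^ 2)) / 2 = x ^ 2 by ring]
  exact sum_congr rfl fun k _ ↦ by ring

theorem eventuallyEq_sum {x : ℝ} (hx : 0 < x) :
    Tfun ν N n =ᶠ[𝓝 x]
      fun y ↦ ∑ k ∈ range (n + 1), coeff ν N n k * y ^ ((N : ℝ) + 1 / 2 + 2 * (k : ℝ)) :=
  (eventually_gt_nhds hx).mono fun _ ↦ eq_sum ν N n

theorem opL_term_eq_sub (x : ℝ) (k : ℕ) :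
    coeff ν N n k * ((((N : ℝ) + 1 / 2 + 2 * k - 1 / 2) ^ 2 - (N : ℝ) ^ 2)
        * x ^ ((N : ℝ) + 1 / 2 + 2 * k - 2)
        - ((N : ℝ) + 1 / 2 + 2 * k) * ((N : ℝ) + 1 / 2 + 2 * k + 2 * ν + 1)
          * x ^ ((N : ℝ) + 1 / 2 + 2 * k))
      + ((N : ℝ) + 2 * n + 1 / 2) * ((N : ℝ) + 2 * ν + 2 * n + 3 / 2)
        * (coeff ν N n k * x ^ ((N : ℝ) + 1 / 2 + 2 * k))
      = 4 * k * (k + N) * coeff ν N n k * x ^ ((N : ℝ) + 1 / 2 + 2 * k - 2)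
        - 4 * ((k + 1 : ℕ) : ℝ) * (((k + 1 : ℕ) : ℝ) + N) * coeff ν N n (k + 1)
          * x ^ ((N : ℝ) + 1 / 2 + 2 * ((k + 1 : ℕ) : ℝ) - 2) := by
  rw [show (N : ℝ) + 1 / 2 + 2 * ((k + 1 : ℕ) : ℝ) - 2 = (N : ℝ) + 1 / 2 + 2 * k by
    push_cast; ring]
  push_cast
  linear_combination (4 * x ^ ((N : ℝ) + 1 / 2 + 2 * k)) * coeff_succ ν N n k

end Tfun

theorem Tfun_eigenfunction_general (ν : ℝ) (N n : ℕ) :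
    ∀ x ∈ Set.Ioo (0:ℝ) 1,
      (1 - x ^ 2) * deriv (deriv (Tfun ν N n)) x - 2 * (ν + 1) * x * deriv (Tfun ν N n) x +
          ((1 / 4 - (N : ℝ) ^ 2) / x ^ 2) * Tfun ν N n x
        = -(((N : ℝ) + 2 * n + 1 / 2) * ((N : ℝ) + 2 * ν + 2 * n + 3 / 2)) * Tfun ν N n x := by
  rintro x ⟨hx, -⟩
  change opL ν N (Tfun ν N n) x = _
  rw [opL_congr (Tfun.eventuallyEq_sum ν N n hx), opL_sum_rpow _ _ _ _ _ hx.ne',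
    Tfun.eq_sum ν N n hx, neg_mul, eq_neg_iff_add_eq_zero, mul_sum, ← sum_add_distrib,
    sum_congr rfl fun k _ ↦ Tfun.opL_term_eq_sub ν N n x k, sum_range_sub', Tfun.coeff_succ_self]
  simp

theorem Tfun_eigenfunction (ν : ℝ) (hν : ν > -1) (N n : ℕ) :
    ∀ x ∈ Set.Ioo (0:ℝ) 1,
      (1 - x ^ 2) * deriv (deriv (Tfun ν N n)) x - 2 * (ν + 1) * x * deriv (Tfun ν N n) x +
          ((1 / 4 - (N : ℝ) ^ 2) / x ^ 2) * Tfun ν N n x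
        = -(((N : ℝ) + 2 * n + 1 / 2) * ((N : ℝ) + 2 * ν + 2 * n + 3 / 2)) * Tfun ν N n x :=
  Tfun_eigenfunction_general ν N n
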